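/- arXiv:1803.00258 — 5 statements merged into one kernel-verified Lean document; each statement's English description precedes it below -/
import Mathlib

section
/- Let E be a real normed vector space, H ⊆ E an arbitrary subset and r > 0. Then E(H,r) \ S(H,r) ⊆ E(∂H, r); that is, every point y with dist(y,H) < r that does not satisfy (y ∈ H and dist(y,∂H) ≥ r) satisfies dist(y, ∂H) < r. -/
lemma preconnected_inter_frontier {X : Type*} [TopologicalSpace X] {s H : Set X}
    (hs : IsPreconnected s) (ha : ∃ a ∈ s, a ∈ H) (hb : ∃ b ∈ s, b ∉ closure H) :
    (s ∩ frontier H).Nonempty := by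
  by_contra hne
  rw [Set.not_nonempty_iff_eq_empty, ← Set.disjoint_iff_inter_eq_empty] at hne
  obtain ⟨a, has, haH⟩ := ha
  obtain ⟨b, hbs, hbH⟩ := hb
  have hsub : s ⊆ interior H ∪ (closure H)ᶜ := by
    intro x hx
    have hxf : x ∉ frontier H := fun h => hne.le_bot ⟨hx, h⟩
    by_cases hxc : x ∈ closure H
    · left
      by_contra hxi
      exact hxf ⟨hxc, hxi⟩
    · exact Or.inr hxc
  have ha' : a ∈ interior H := by
    have : a ∈ interior H ∪ (closure H)ᶜ := hsub has
    rcases this with h | h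
    · exact h
    · exact absurd (subset_closure haH) h
  obtain ⟨x, hxs, hx1, hx2⟩ := hs (interior H) (closure H)ᶜ isOpen_interior
    (isOpen_compl_iff.mpr isClosed_closure) hsub ⟨a, has, ha'⟩ ⟨b, hbs, hbH⟩
  exact hx2 (interior_subset_closure hx1)

/-- For an arbitrary subset `H` of a real normed vector space and `r > 0`, the open
`r`-enlargement `E(H,r) = {y | dist(y,H) < r}` minus the `r`-shrinking
`S(H,r) = {y ∈ H | dist(y,∂H) ≥ r}` is contained in the open `r`-enlargement of the
topological boundary `∂H`. -/
theorem enlargement_diff_shrinking_subset {E : Type*} [NormedAddCommGroup E]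
    [NormedSpace ℝ E] (H : Set E) (r : ℝ) (hr : 0 < r) :
    {y : E | Metric.infDist y H < r} \ {y : E | y ∈ H ∧ r ≤ Metric.infDist y (frontier H)}
      ⊆ {y : E | Metric.infDist y (frontier H) < r} := by
  rintro y ⟨hyE, hyS⟩
  simp only [Set.mem_setOf_eq] at hyE hyS ⊢
  push_neg at hyS
  by_cases hyH : y ∈ H
  · exact hyS hyH
  · rcases H.eq_empty_or_nonempty with rfl | hHne
    · simpa [frontier_empty] using hr
    · by_cases hyc : y ∈ closure H
      · have : y ∈ frontier H := ⟨hyc, fun h => hyH (interior_subset h)⟩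
        calc Metric.infDist y (frontier H) = 0 := by
              rw [← Metric.infDist_zero_of_mem this]
          _ < r := hr
      · obtain ⟨x, hxH, hxy⟩ := (Metric.infDist_lt_iff hHne).mp hyE
        obtain ⟨z, hzseg, hzf⟩ := preconnected_inter_frontier
          ((convex_segment y x).isPreconnected) ⟨x, right_mem_segment ℝ y x, hxH⟩
          ⟨y, left_mem_segment ℝ y x, hyc⟩
        have hdz : dist y z ≤ dist y x := by
          have := dist_add_dist_of_mem_segment hzseg
          linarith [dist_nonneg (x := z) (y := x)]
        calc Metric.infDist y (frontier H) ≤ dist y z := Metric.infDist_le_dist_of_mem hzf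
          _ ≤ dist y x := hdz
          _ < r := hxy
end

section
/- Let ι be a measurable space, ν a measure on ι, and H : ι → Set(ℝ^d) a family of subsets of ℝ^d such that for each r ∈ (0,1] the function i ↦ L(E(H i, r) \ S(H i, r)) is measurable and i ↦ L(∂(H i)) is measurable. If ∫₀¹ (1/r) · (∫_ι L(E(H i, r) \ S(H i, r)) dν(i)) dr < ∞, then L(∂(H i)) = 0 for ν-almost every i. -/
/-!
A boundary point of `H` is at distance `0` both from `H` and from `∂H`, so
`∂H ⊆ E(H, r) \ S(H, r)` for every `r > 0`. Hence `c := ∫ L(∂(H i)) dν(i)` is bounded by the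
inner integral of the thinness condition for every `r ∈ (0, 1]`, and the thinness integral is at
least `c · ∫₀¹ dr / r`. Since `∫₀¹ dr / r = ∞`, finiteness forces `c = 0`.
-/

open MeasureTheory Metric Set

/-- The region `E(s, r) \ S(s, r)` of the thinness condition. -/
def thinShell {X : Type*} [PseudoMetricSpace X] (s : Set X) (r : ℝ) : Set X :=
  {y | infDist y s < r} \ {y | y ∈ s ∧ r ≤ infDist y (frontier s)}

theorem frontier_subset_thinShell {X : Type*} [PseudoMetricSpace X] (s : Set X) {r : ℝ}
    (hr : 0 < r) : frontier s ⊆ thinShell s r := by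
  intro y hy
  refine ⟨?_, fun ⟨_, hle⟩ => ?_⟩
  · rwa [mem_ofPred_eq, infDist_zero_of_mem_closure hy.1]
  · rw [infDist_zero_of_mem hy] at hle
    exact hle.not_gt hr

theorem lintegral_ofReal_one_div_Ioc_eq_top {a : ℝ} (ha : 0 < a) :
    ∫⁻ r in Ioc 0 a, ENNReal.ofReal (1 / r) = ⊤ := by
  by_contra hfin
  have hint : IntervalIntegrable (fun r : ℝ => r⁻¹) volume 0 a := by
    rw [intervalIntegrable_iff_integrableOn_Ioc_of_le ha.le]
    refine (lintegral_ofReal_ne_top_iff_integrable measurable_inv.aestronglyMeasurable ?_).1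
      (by simpa only [one_div] using hfin)
    filter_upwards [ae_restrict_mem measurableSet_Ioc] with r hr
    exact inv_nonneg.2 hr.1.le
  simp [intervalIntegrable_inv_iff, ha.ne] at hint

theorem eq_zero_of_le_of_lintegral_mul_lt_top {α : Type*} [MeasurableSpace α] {μ : Measure α}
    {w g : α → ENNReal} {c : ENNReal} (hw : ∫⁻ x, w x ∂μ = ⊤) (hcg : ∀ᵐ x ∂μ, c ≤ g x)
    (hfin : ∫⁻ x, w x * g x ∂μ < ⊤) : c = 0 := by
  by_contra hc
  have hle : ⊤ ≤ ∫⁻ x, w x * g x ∂μ :=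
    calc ⊤ = (∫⁻ x, w x ∂μ) * c := by rw [hw, ENNReal.top_mul hc]
      _ ≤ ∫⁻ x, w x * c ∂μ := lintegral_mul_const_le c w
      _ ≤ ∫⁻ x, w x * g x ∂μ := lintegral_mono_ae (hcg.mono fun _ h => mul_le_mul_right h _)
  exact (hle.trans_lt hfin).false

theorem ae_frontier_null_of_thin_general {ι : Type*} [MeasurableSpace ι] (d : ℕ) (ν : Measure ι)
    (H : ι → Set (EuclideanSpace ℝ (Fin d)))
    (hmeas' : Measurable fun i => volume (frontier (H i)))
    (hfin : ∫⁻ r in Set.Ioc (0:ℝ) 1, ENNReal.ofReal (1/r) *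
      ∫⁻ i, volume ({y | Metric.infDist y (H i) < r} \
        {y | y ∈ H i ∧ r ≤ Metric.infDist y (frontier (H i))}) ∂ν < ⊤) :
    ∀ᵐ i ∂ν, volume (frontier (H i)) = 0 := by
  have hdom : ∀ᵐ r ∂volume.restrict (Ioc (0:ℝ) 1),
      ∫⁻ i, volume (frontier (H i)) ∂ν ≤ ∫⁻ i, volume (thinShell (H i) r) ∂ν := by
    filter_upwards [ae_restrict_mem measurableSet_Ioc] with r hr
    exact lintegral_mono fun i => measure_mono (frontier_subset_thinShell (H i) hr.1)
  have hzero : ∫⁻ i, volume (frontier (H i)) ∂ν = 0 :=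
    eq_zero_of_le_of_lintegral_mul_lt_top (lintegral_ofReal_one_div_Ioc_eq_top one_pos) hdom hfin
  exact (lintegral_eq_zero_iff hmeas').1 hzero

/-- Thinness implies Assumption 2: if
`∫₀¹ (1/r) ∫_ι L(E(H i,r) \ S(H i,r)) dν(i) dr < ∞`, then `ν`-almost every generating set
has Lebesgue-null topological boundary. -/
theorem ae_frontier_null_of_thin {ι : Type*} [MeasurableSpace ι] (d : ℕ) (ν : Measure ι)
    (H : ι → Set (EuclideanSpace ℝ (Fin d)))
    (hmeas : ∀ r ∈ Set.Ioc (0:ℝ) 1, Measurable fun i =>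
      volume ({y | Metric.infDist y (H i) < r} \
        {y | y ∈ H i ∧ r ≤ Metric.infDist y (frontier (H i))}))
    (hmeas' : Measurable fun i => volume (frontier (H i)))
    (hfin : ∫⁻ r in Set.Ioc (0:ℝ) 1, ENNReal.ofReal (1/r) *
      ∫⁻ i, volume ({y | Metric.infDist y (H i) < r} \
        {y | y ∈ H i ∧ r ≤ Metric.infDist y (frontier (H i))}) ∂ν < ⊤) :
    ∀ᵐ i ∂ν, volume (frontier (H i)) = 0 :=
  ae_frontier_null_of_thin_general d ν H hmeas' hfin
end

section
/- Let d ≥ 1, let H ⊆ ℝ^d and r > 0. Then ∫_{1/2}^{1} ρ^{-(d+1)} · L({x ∈ ρ•H : dist(x, ∂(ρ•H)) < r}) dρ ≤ (log 2) · L({x ∈ H : dist(x, ∂H) < 2r}). -/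
/-!
Scaling by `ρ` multiplies distances by `ρ`, so `[∂(ρ•H)]^r = ρ • [∂H]^{r/ρ}`, whose volume is
`ρ^d · L([∂H]^{r/ρ}) ≤ ρ^d · L([∂H]^{2r})` for `ρ ∈ (1/2, 1]`. The integrand is therefore at most
`ρ⁻¹ · L([∂H]^{2r})`, and `∫_{1/2}^1 ρ⁻¹ dρ = log 2`.
-/

open MeasureTheory Pointwise Metric Set Module

theorem frontier_smul₀ {G₀ α : Type*} [GroupWithZero G₀] [TopologicalSpace α] [MulAction G₀ α]
    [ContinuousConstSMul G₀ α] {c : G₀} (hc : c ≠ 0) (s : Set α) :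
    frontier (c • s) = c • frontier s :=
  ((Homeomorph.smulOfNeZero c hc).image_frontier s).symm

/-- The inner `r`-neighbourhood `[∂s]^r` of the frontier of `s`. -/
def innerFrontierThickening {E : Type*} [PseudoMetricSpace E] (s : Set E) (r : ℝ) : Set E :=
  {x | x ∈ s ∧ infDist x (frontier s) < r}

section Thickening

variable {E : Type*} [NormedAddCommGroup E]

theorem innerFrontierThickening_mono (s : Set E) {r r' : ℝ} (h : r ≤ r') :
    innerFrontierThickening s r ⊆ innerFrontierThickening s r' :=
  fun _ ⟨hx, hxr⟩ => ⟨hx, hxr.trans_le h⟩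

theorem innerFrontierThickening_smul₀ {𝕜 : Type*} [NormedField 𝕜] [NormedSpace 𝕜 E] {c : 𝕜}
    (hc : c ≠ 0) (s : Set E) (r : ℝ) :
    innerFrontierThickening (c • s) (‖c‖ * r) = c • innerFrontierThickening s r := by
  ext x
  obtain ⟨y, rfl⟩ : ∃ y, c • y = x := ⟨c⁻¹ • x, smul_inv_smul₀ hc x⟩
  simp only [innerFrontierThickening, mem_ofPred_eq, smul_mem_smul_set_iff₀ hc,
    frontier_smul₀ hc, infDist_smul₀ hc, mul_lt_mul_iff_right₀ (norm_pos_iff.2 hc)]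

variable [NormedSpace ℝ E] [MeasurableSpace E] [BorelSpace E] [FiniteDimensional ℝ E]
  (μ : Measure E) [μ.IsAddHaarMeasure]

theorem addHaar_innerFrontierThickening_smul {c : ℝ} (hc : 0 < c) (s : Set E) (r : ℝ) :
    μ (innerFrontierThickening (c • s) r)
      = ENNReal.ofReal (c ^ finrank ℝ E) * μ (innerFrontierThickening s (r / c)) := by
  rw [← Measure.addHaar_smul_of_nonneg μ hc.le, ← innerFrontierThickening_smul₀ hc.ne',
    Real.norm_of_nonneg hc.le, mul_div_cancel₀ r hc.ne']

theorem addHaar_innerFrontierThickening_smul_le {ρ r : ℝ} (hρ : ρ ∈ Ioc (1 / 2 : ℝ) 1)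
    (hr : 0 ≤ r) (s : Set E) :
    ENNReal.ofReal (1 / ρ ^ (finrank ℝ E + 1)) * μ (innerFrontierThickening (ρ • s) r)
      ≤ ENNReal.ofReal ρ⁻¹ * μ (innerFrontierThickening s (2 * r)) := by
  have hρ₀ : 0 < ρ := lt_trans (by norm_num) hρ.1
  have hradius : r / ρ ≤ 2 * r := by
    rw [div_le_iff₀ hρ₀]
    nlinarith [hρ.1]
  have hpow : 1 / ρ ^ (finrank ℝ E + 1) * ρ ^ finrank ℝ E = ρ⁻¹ := by
    field_simp
    ring
  calc ENNReal.ofReal (1 / ρ ^ (finrank ℝ E + 1)) * μ (innerFrontierThickening (ρ • s) r)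
      = ENNReal.ofReal ρ⁻¹ * μ (innerFrontierThickening s (r / ρ)) := by
        rw [addHaar_innerFrontierThickening_smul μ hρ₀, ← mul_assoc,
          ← ENNReal.ofReal_mul (by positivity), hpow]
    _ ≤ ENNReal.ofReal ρ⁻¹ * μ (innerFrontierThickening s (2 * r)) := by
        gcongr
        exact innerFrontierThickening_mono s hradius

end Thickening

theorem lintegral_Ioc_ofReal_inv {a b : ℝ} (ha : 0 < a) (hab : a ≤ b) :
    ∫⁻ x in Ioc a b, ENNReal.ofReal x⁻¹ = ENNReal.ofReal (Real.log (b / a)) := by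
  have hint : IntegrableOn (fun x : ℝ => x⁻¹) (Ioc a b) :=
    ((continuousOn_inv₀.mono fun x hx => (ha.trans_le hx.1).ne').integrableOn_Icc).mono_set
      Ioc_subset_Icc_self
  have hnonneg : ∀ᵐ x ∂volume.restrict (Ioc a b), 0 ≤ x⁻¹ :=
    (ae_restrict_iff' measurableSet_Ioc).2 (.of_forall fun x hx => inv_nonneg.2 (ha.trans hx.1).le)
  rw [← ofReal_integral_eq_lintegral_ofReal hint hnonneg, ← intervalIntegral.integral_of_le hab,
    integral_inv_of_pos ha (ha.trans_le hab)]

theorem scaled_inner_boundary_integral_le_general (d : ℕ)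
    (H : Set (EuclideanSpace ℝ (Fin d))) (r : ℝ) (hr : 0 < r) :
    ∫⁻ ρ in Set.Ioc (1/2 : ℝ) 1, ENNReal.ofReal (1 / ρ ^ (d+1)) *
        volume {x | x ∈ ρ • H ∧ Metric.infDist x (frontier (ρ • H)) < r}
      ≤ ENNReal.ofReal (Real.log 2) *
        volume {x | x ∈ H ∧ Metric.infDist x (frontier H) < 2*r} := by
  calc _ ≤ ∫⁻ ρ in Ioc (1/2 : ℝ) 1,
          ENNReal.ofReal ρ⁻¹ * volume (innerFrontierThickening H (2 * r)) := by
        refine setLIntegral_mono' measurableSet_Ioc fun ρ hρ => ?_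
        have h := addHaar_innerFrontierThickening_smul_le volume hρ hr.le H
        rw [finrank_euclideanSpace_fin] at h
        exact h
    _ = ENNReal.ofReal (Real.log 2) * volume (innerFrontierThickening H (2 * r)) := by
        rw [lintegral_mul_const _ measurable_inv.ennreal_ofReal,
          lintegral_Ioc_ofReal_inv (by norm_num) (by norm_num)]
        norm_num

/-- Key scaling inequality: for any `H ⊆ ℝ^d` and `r > 0`,
`∫_{1/2}^1 ρ^{-(d+1)} L([∂(ρ•H)]^r) dρ ≤ (log 2)·L([∂H]^{2r})`, where `[∂H]^r` denotes the
inner `r`-neighbourhood of the boundary of `H`. -/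
theorem scaled_inner_boundary_integral_le (d : ℕ) (hd : 1 ≤ d)
    (H : Set (EuclideanSpace ℝ (Fin d))) (r : ℝ) (hr : 0 < r) :
    ∫⁻ ρ in Set.Ioc (1/2 : ℝ) 1, ENNReal.ofReal (1 / ρ ^ (d+1)) *
        volume {x | x ∈ ρ • H ∧ Metric.infDist x (frontier (ρ • H)) < r}
      ≤ ENNReal.ofReal (Real.log 2) *
        volume {x | x ∈ H ∧ Metric.infDist x (frontier H) < 2*r} :=
  scaled_inner_boundary_integral_le_general d H r hr
end

section
/- Let d ≥ 2 and let (x_k)_{k≥1} be a sequence of points of [0,1]^d whose range is dense in [0,1]^d. Let Q_k be the open axis-parallel cube centered at x_k with side length 2^{-k-1}, and set H := ⋃_{k≥1} Q_k. Then: (a) L(H) ≤ 2^{-d} and L(∂H) ≥ 1 − 2^{-d} > 0; and (b) there exists c < ∞ such that L({x ∈ H : dist(x, ∂H) < r}) ≤ c·r for all r ∈ (0,1], and consequently ∫₀¹ (1/r)·L({x ∈ H : dist(x,∂H) < r}) dr < ∞. -/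
/-!
The cubes have total volume at most `∑ₖ 2^{-(k+2)d} ≤ 2^{-d}`, while their union `H` is dense
in `[0,1]^d`; as `H` is open, `[0,1]^d \ H ⊆ ∂H`, so `L(∂H) ≥ 1 - 2^{-d}`.
A point of `Q_k` within distance `r` of `∂H` cannot lie in the concentric cube of half-side
shrunk by `r`, whose `r`-ball stays in `Q_k ⊆ H`. Hence `[∂H]^r` is covered by the shells of
width `r` of the cubes, of volume `≤ d (2^{-k-2})^{d-1} 2r`; for `d ≥ 2` these sum to `≤ d r`.
-/

open MeasureTheory Metric Set

variable {ι : Type*}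

def openCube (c : EuclideanSpace ℝ ι) (s : ℝ) : Set (EuclideanSpace ℝ ι) :=
  {y | ∀ i, |y i - c i| < s}

theorem openCube_eq_setOf_ball (c : EuclideanSpace ℝ ι) (s : ℝ) :
    openCube c s = {y | ∀ i, y i ∈ ball (c i) s} := by
  simp only [openCube, mem_ball, Real.dist_eq]

variable [Fintype ι]

theorem isOpen_openCube (c : EuclideanSpace ℝ ι) (s : ℝ) : IsOpen (openCube c s) := by
  rw [openCube_eq_setOf_ball, ofPred_forall]
  exact isOpen_iInter_of_finite fun i => isOpen_ball.preimage (PiLp.continuous_apply 2 _ i)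

theorem EuclideanSpace.volume_setOf_forall_apply_mem (s : ι → Set ℝ)
    (hs : ∀ i, MeasurableSet (s i)) :
    volume {y : EuclideanSpace ℝ ι | ∀ i, y i ∈ s i} = ∏ i, volume (s i) := by
  have : {y : EuclideanSpace ℝ ι | ∀ i, y i ∈ s i} = WithLp.ofLp ⁻¹' univ.pi s := by
    ext; simp
  rw [this, (PiLp.volume_preserving_ofLp ι).measure_preimage
    (MeasurableSet.univ_pi hs).nullMeasurableSet, volume_pi_pi]

theorem volume_openCube (c : EuclideanSpace ℝ ι) (s : ℝ) :
    volume (openCube c s) = ENNReal.ofReal (2 * s) ^ Fintype.card ι := by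
  rw [openCube_eq_setOf_ball, EuclideanSpace.volume_setOf_forall_apply_mem _
    fun _ => measurableSet_ball]
  simp [Real.volume_ball]

theorem ball_subset_openCube {c y : EuclideanSpace ℝ ι} {s r : ℝ}
    (hy : y ∈ openCube c (s - r)) :
    ball y r ⊆ openCube c s := fun z hz i => by
  have hzy : |z i - y i| < r := (PiLp.dist_apply_le z y i).trans_lt (mem_ball.1 hz)
  calc |z i - c i| ≤ |z i - y i| + |y i - c i| := abs_sub_le _ _ _
    _ < r + (s - r) := add_lt_add hzy (hy i)
    _ = s := add_sub_cancel _ _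

theorem pow_sub_pow_le_mul_sub {α : Type*} [CommRing α] [LinearOrder α] [IsOrderedRing α]
    {a b : α} (hb : 0 ≤ b) (hba : b ≤ a) (n : ℕ) :
    a ^ n - b ^ n ≤ n * a ^ (n - 1) * (a - b) := by
  calc a ^ n - b ^ n = |a ^ n - b ^ n| :=
        (abs_of_nonneg (sub_nonneg.2 (pow_le_pow_left₀ hb hba n))).symm
    _ ≤ |a - b| * n * max |a| |b| ^ (n - 1) := abs_pow_sub_pow_le ..
    _ = n * a ^ (n - 1) * (a - b) := by
      rw [abs_of_nonneg (sub_nonneg.2 hba), abs_of_nonneg (hb.trans hba), abs_of_nonneg hb,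
        max_eq_left hba]
      ring

theorem volume_openCube_diff_le [Nonempty ι] (c : EuclideanSpace ℝ ι) {s r : ℝ} (hs : 0 ≤ s)
    (hr : 0 ≤ r) :
    volume (openCube c s \ openCube c (s - r)) ≤
      ENNReal.ofReal (Fintype.card ι * (2 * s) ^ (Fintype.card ι - 1) * (2 * r)) := by
  set n := Fintype.card ι
  have hn : n - 1 + 1 = n := Nat.sub_add_cancel Fintype.card_pos
  rcases le_or_gt r s with hrs | hsr
  · have hsub : openCube c (s - r) ⊆ openCube c s := fun y hy i => (hy i).trans_le (by linarith)
    rw [measure_sdiff hsub (isOpen_openCube c _).measurableSet.nullMeasurableSet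
        (by rw [volume_openCube]; exact ENNReal.pow_ne_top ENNReal.ofReal_ne_top),
      volume_openCube, volume_openCube, ← ENNReal.ofReal_pow (by linarith),
      ← ENNReal.ofReal_pow (by linarith), ← ENNReal.ofReal_sub _ (by positivity)]
    refine ENNReal.ofReal_le_ofReal
      ((pow_sub_pow_le_mul_sub (by linarith) (by linarith) n).trans_eq ?_)
    ring
  · calc volume (openCube c s \ openCube c (s - r)) ≤ volume (openCube c s) :=
          measure_mono sdiff_subset
      _ = ENNReal.ofReal ((2 * s) ^ (n - 1) * (2 * s)) := by
          rw [volume_openCube, ← ENNReal.ofReal_pow (by linarith), ← pow_succ, hn]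
      _ ≤ ENNReal.ofReal (n * (2 * s) ^ (n - 1) * (2 * r)) := by
          refine ENNReal.ofReal_le_ofReal ?_
          calc (2 * s) ^ (n - 1) * (2 * s) ≤ (2 * s) ^ (n - 1) * (2 * r) := by gcongr
            _ ≤ n * (2 * s) ^ (n - 1) * (2 * r) := by
              rw [mul_assoc]
              exact le_mul_of_one_le_left (by positivity) (by exact_mod_cast Fintype.card_pos)

-- The paper's `[∂U]^r`.
def innerFrontierNbhd {X : Type*} [PseudoMetricSpace X] (U : Set X) (r : ℝ) : Set X :=
  {y | y ∈ U ∧ infDist y (frontier U) < r}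

theorem le_infDist_frontier_of_ball_subset {X : Type*} [PseudoMetricSpace X] {U : Set X}
    (hU : IsOpen U) (hne : (frontier U).Nonempty) {y : X} {r : ℝ} (hy : ball y r ⊆ U) :
    r ≤ infDist y (frontier U) := by
  by_contra! h
  obtain ⟨z, hz, hyz⟩ := (infDist_lt_iff hne).1 h
  rw [hU.frontier_eq] at hz
  exact hz.2 (hy (mem_ball_comm.1 hyz))

theorem innerFrontierNbhd_iUnion_openCube_subset {κ : Type*} (c : κ → EuclideanSpace ℝ ι)
    (s : κ → ℝ) (hne : (frontier (⋃ k, openCube (c k) (s k))).Nonempty) (r : ℝ) :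
    innerFrontierNbhd (⋃ k, openCube (c k) (s k)) r ⊆
      ⋃ k, openCube (c k) (s k) \ openCube (c k) (s k - r) := by
  rintro y ⟨hy, hyr⟩
  obtain ⟨k, hyk⟩ := mem_iUnion.1 hy
  refine mem_iUnion.2 ⟨k, hyk, fun hy' => hyr.not_ge ?_⟩
  exact le_infDist_frontier_of_ball_subset (isOpen_iUnion fun k => isOpen_openCube _ _) hne
    ((ball_subset_openCube hy').trans (subset_iUnion (fun k => openCube (c k) (s k)) k))

theorem ENNReal.tsum_inv_two_pow_add_one : ∑' k : ℕ, (2⁻¹ : ENNReal) ^ (k + 1) = 1 := by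
  rw [ENNReal.tsum_geometric_add_one, ENNReal.one_sub_inv_two, inv_inv,
    ENNReal.inv_mul_cancel two_ne_zero ENNReal.ofNat_ne_top]

theorem ENNReal.ofReal_inv_two_pow (k : ℕ) : ENNReal.ofReal (2⁻¹ ^ k) = 2⁻¹ ^ k := by
  simp [ENNReal.inv_pow]

-- Half the side `2^{-(k+1)-1}` of the paper's cube `Q_{k+1}`.
noncomputable def dyadicRadius (k : ℕ) : ℝ := 2 ^ (-(k : ℤ) - 3)

theorem dyadicRadius_pos (k : ℕ) : 0 < dyadicRadius k := zpow_pos two_pos _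

theorem two_mul_dyadicRadius (k : ℕ) : 2 * dyadicRadius k = 2⁻¹ ^ (k + 2) := by
  rw [dyadicRadius, show -(k : ℤ) - 3 = -((k + 3 : ℕ) : ℤ) by push_cast; ring, zpow_neg,
    zpow_natCast, ← inv_pow, pow_succ]
  ring

def dyadicCubeUnion (x : ℕ → EuclideanSpace ℝ ι) : Set (EuclideanSpace ℝ ι) :=
  ⋃ k, openCube (x k) (dyadicRadius k)

theorem volume_dyadicCubeUnion_le (x : ℕ → EuclideanSpace ℝ ι)
    (hn : 1 ≤ Fintype.card ι) :
    volume (dyadicCubeUnion x) ≤ 2⁻¹ ^ Fintype.card ι := by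
  calc volume (dyadicCubeUnion x)
      ≤ ∑' k, volume (openCube (x k) (dyadicRadius k)) := measure_iUnion_le _
    _ = ∑' k : ℕ, (2⁻¹ : ENNReal) ^ ((k + 2) * Fintype.card ι) := by
      simp_rw [volume_openCube, two_mul_dyadicRadius, ENNReal.ofReal_inv_two_pow, pow_mul]
    _ ≤ ∑' k : ℕ, (2⁻¹ : ENNReal) ^ Fintype.card ι * 2⁻¹ ^ (k + 1) := by
      refine ENNReal.tsum_le_tsum fun k => ?_
      rw [← pow_add]
      exact pow_le_pow_right_of_le_one' (by norm_num) (by nlinarith)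
    _ = 2⁻¹ ^ Fintype.card ι := by
      rw [ENNReal.tsum_mul_left, ENNReal.tsum_inv_two_pow_add_one, mul_one]

theorem volume_innerFrontierNbhd_dyadicCubeUnion_le (x : ℕ → EuclideanSpace ℝ ι)
    (hn : 2 ≤ Fintype.card ι) (hne : (frontier (dyadicCubeUnion x)).Nonempty) {r : ℝ}
    (hr : 0 ≤ r) :
    volume (innerFrontierNbhd (dyadicCubeUnion x) r) ≤ ENNReal.ofReal (Fintype.card ι * r) := by
  set n := Fintype.card ι
  have : Nonempty ι := Fintype.card_pos_iff.1 (by omega)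
  have hterm (k : ℕ) :
      n * (2 * dyadicRadius k) ^ (n - 1) * (2 * r) ≤ n * r * 2⁻¹ ^ (k + 1) := by
    have hρ : 2 * dyadicRadius k ≤ 1 := by
      rw [two_mul_dyadicRadius]; exact pow_le_one₀ (by norm_num) (by norm_num)
    calc n * (2 * dyadicRadius k) ^ (n - 1) * (2 * r) ≤ n * (2 * dyadicRadius k) * (2 * r) := by
          gcongr
          exact pow_le_of_le_one (by linarith [dyadicRadius_pos k]) hρ (by omega)
      _ = n * r * 2⁻¹ ^ (k + 1) := by rw [two_mul_dyadicRadius]; ring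
  calc _ ≤ volume (⋃ k, openCube (x k) (dyadicRadius k) \
          openCube (x k) (dyadicRadius k - r)) :=
        measure_mono (innerFrontierNbhd_iUnion_openCube_subset x dyadicRadius hne r)
    _ ≤ ∑' k, volume (openCube (x k) (dyadicRadius k) \ openCube (x k) (dyadicRadius k - r)) :=
        measure_iUnion_le _
    _ ≤ ∑' k : ℕ, ENNReal.ofReal (n * r) * 2⁻¹ ^ (k + 1) := by
        refine ENNReal.tsum_le_tsum fun k => ?_
        refine (volume_openCube_diff_le (x k) (dyadicRadius_pos k).le hr).trans ?_
        rw [← ENNReal.ofReal_inv_two_pow, ← ENNReal.ofReal_mul (by positivity)]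
        exact ENNReal.ofReal_le_ofReal (hterm k)
    _ = ENNReal.ofReal (n * r) := by
        rw [ENNReal.tsum_mul_left, ENNReal.tsum_inv_two_pow_add_one, mul_one]

theorem volume_sub_volume_le_volume_frontier {X : Type*} [TopologicalSpace X] [MeasurableSpace X]
    (μ : Measure X) {U B : Set X} (hU : IsOpen U) (hB : B ⊆ closure U) :
    μ B - μ U ≤ μ (frontier U) :=
  le_measure_sdiff.trans (measure_mono (hU.frontier_eq ▸ sdiff_subset_sdiff_left hB))

theorem setLIntegral_ofReal_inv_mul_lt_top_of_le {f : ℝ → ENNReal} {c : ℝ}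
    (hf : ∀ r ∈ Ioc (0 : ℝ) 1, f r ≤ ENNReal.ofReal (c * r)) :
    ∫⁻ r in Ioc (0 : ℝ) 1, ENNReal.ofReal (1 / r) * f r < ⊤ := by
  calc ∫⁻ r in Ioc (0 : ℝ) 1, ENNReal.ofReal (1 / r) * f r
      ≤ ∫⁻ _ in Ioc (0 : ℝ) 1, ENNReal.ofReal c := by
        refine setLIntegral_mono' measurableSet_Ioc fun r hr => ?_
        calc ENNReal.ofReal (1 / r) * f r ≤ ENNReal.ofReal (1 / r) * ENNReal.ofReal (c * r) := by
              gcongr; exact hf r hr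
          _ = ENNReal.ofReal c := by
              rw [← ENNReal.ofReal_mul (by positivity [hr.1]), one_div_mul_eq_div,
                mul_div_cancel_right₀ _ hr.1.ne']
    _ < ⊤ := by simp

theorem union_of_cubes_counterexample_general (d : ℕ) (hd : 2 ≤ d)
    (x : ℕ → EuclideanSpace ℝ (Fin d))
    (hdense : {y : EuclideanSpace ℝ (Fin d) | ∀ i, y i ∈ Set.Icc (0:ℝ) 1}
      ⊆ closure (Set.range x))
    (H : Set (EuclideanSpace ℝ (Fin d)))
    (hH : H = ⋃ k : ℕ, {y | ∀ i, |y i - x k i| < (2:ℝ) ^ (-(k:ℤ) - 3)}) :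
    (volume H ≤ ENNReal.ofReal ((2:ℝ) ^ (-(d:ℤ))) ∧
      ENNReal.ofReal (1 - (2:ℝ) ^ (-(d:ℤ))) ≤ volume (frontier H) ∧
      0 < volume (frontier H)) ∧
    ∃ c : ℝ, (∀ r ∈ Set.Ioc (0:ℝ) 1,
        volume {y | y ∈ H ∧ Metric.infDist y (frontier H) < r} ≤ ENNReal.ofReal (c * r)) ∧
      ∫⁻ r in Set.Ioc (0:ℝ) 1, ENNReal.ofReal (1/r) *
        volume {y | y ∈ H ∧ Metric.infDist y (frontier H) < r} < ⊤ := by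
  replace hH : H = dyadicCubeUnion x := hH
  have hvolH : volume H ≤ ENNReal.ofReal ((2:ℝ) ^ (-(d:ℤ))) := by
    rw [hH, zpow_neg, zpow_natCast, ← inv_pow, ENNReal.ofReal_inv_two_pow]
    simpa using volume_dyadicCubeUnion_le x (by simp; omega)
  have hclosure : {y : EuclideanSpace ℝ (Fin d) | ∀ i, y i ∈ Icc (0:ℝ) 1} ⊆ closure H :=
    hdense.trans <| closure_mono <| range_subset_iff.2 fun k =>
      hH ▸ mem_iUnion.2 ⟨k, fun i => by simpa using dyadicRadius_pos k⟩
  have hfr : ENNReal.ofReal (1 - (2:ℝ) ^ (-(d:ℤ))) ≤ volume (frontier H) :=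
    calc ENNReal.ofReal (1 - (2:ℝ) ^ (-(d:ℤ)))
        = volume {y : EuclideanSpace ℝ (Fin d) | ∀ i, y i ∈ Icc (0:ℝ) 1} -
            ENNReal.ofReal ((2:ℝ) ^ (-(d:ℤ))) := by
          rw [ENNReal.ofReal_sub _ (by positivity),
            EuclideanSpace.volume_setOf_forall_apply_mem _ fun _ => measurableSet_Icc]
          simp
      _ ≤ _ - volume H := tsub_le_tsub_left hvolH _
      _ ≤ volume (frontier H) := volume_sub_volume_le_volume_frontier volume
          (hH ▸ isOpen_iUnion fun k => isOpen_openCube _ _) hclosure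
  have hfrpos : 0 < volume (frontier H) :=
    hfr.trans_lt' (ENNReal.ofReal_pos.2 (sub_pos.2 (zpow_lt_one_of_neg₀ one_lt_two (by omega))))
  have hnbhd (r : ℝ) (hr : r ∈ Ioc (0:ℝ) 1) :
      volume (innerFrontierNbhd H r) ≤ ENNReal.ofReal (d * r) := by
    subst hH
    simpa using volume_innerFrontierNbhd_dyadicCubeUnion_le x
      (by simpa using hd) (nonempty_of_measure_ne_zero hfrpos.ne') hr.1.le
  exact ⟨⟨hvolH, hfr, hfrpos⟩, d, hnbhd, setLIntegral_ofReal_inv_mul_lt_top_of_le hnbhd⟩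

/-- The counterexample of Proposition 1.3(ii): for a dense sequence `(x_k)_{k≥1}` in `[0,1]^d`
(`d ≥ 2`), the union `H` of open axis-parallel cubes `Q_k` centered at `x_k` with side
`2^{-k-1}` satisfies `L(H) ≤ 2^{-d}`, `L(∂H) ≥ 1 - 2^{-d} > 0`, and there exists `c < ∞` with
`L([∂H]^r) ≤ c·r` for `r ∈ (0,1]`, whence `∫₀¹ (1/r)·L([∂H]^r) dr < ∞`.
Here the sequence is indexed by `k : ℕ` corresponding to the paper's index `k+1`, so the
cube around `x k` has side `2^{-(k+1)-1} = 2^{-k-2}` (half-side `2^{-k-3}`). -/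
theorem union_of_cubes_counterexample (d : ℕ) (hd : 2 ≤ d)
    (x : ℕ → EuclideanSpace ℝ (Fin d))
    (hx : ∀ k i, x k i ∈ Set.Icc (0:ℝ) 1)
    (hdense : {y : EuclideanSpace ℝ (Fin d) | ∀ i, y i ∈ Set.Icc (0:ℝ) 1}
      ⊆ closure (Set.range x))
    (H : Set (EuclideanSpace ℝ (Fin d)))
    (hH : H = ⋃ k : ℕ, {y | ∀ i, |y i - x k i| < (2:ℝ) ^ (-(k:ℤ) - 3)}) :
    (volume H ≤ ENNReal.ofReal ((2:ℝ) ^ (-(d:ℤ))) ∧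
      ENNReal.ofReal (1 - (2:ℝ) ^ (-(d:ℤ))) ≤ volume (frontier H) ∧
      0 < volume (frontier H)) ∧
    ∃ c : ℝ, (∀ r ∈ Set.Ioc (0:ℝ) 1,
        volume {y | y ∈ H ∧ Metric.infDist y (frontier H) < r} ≤ ENNReal.ofReal (c * r)) ∧
      ∫⁻ r in Set.Ioc (0:ℝ) 1, ENNReal.ofReal (1/r) *
        volume {y | y ∈ H ∧ Metric.infDist y (frontier H) < r} < ⊤ :=
  union_of_cubes_counterexample_general d hd x hdense H hH
end

section
/- Let ι be a measurable space, ν a measure on ι, and H : ι → Set(ℝ^d) a family of closed subsets of ℝ^d such that for each r ∈ (0,1] the function i ↦ L({x ∈ H i : dist(x, ∂(H i)) < r}) is measurable and i ↦ L(∂(H i)) is measurable. If ∫₀¹ (1/r) · (∫_ι L({x ∈ H i : dist(x, ∂(H i)) < r}) dν(i)) dr < ∞, then L(∂(H i)) = 0 for ν-almost every i. -/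
open MeasureTheory

lemma lintegral_one_div_Ioc_eq_top : ∫⁻ r in Set.Ioc (0:ℝ) 1, ENNReal.ofReal (1/r) = ⊤ := by
  by_contra h
  have hm : Measurable fun r : ℝ => (1 : ℝ)/r :=
    measurable_const.div measurable_id
  have hint : IntegrableOn (fun r : ℝ => 1/r) (Set.Ioc 0 1) := by
    refine ⟨hm.aestronglyMeasurable, ?_⟩
    rw [hasFiniteIntegral_iff_ofReal ?_]
    · exact lt_top_iff_ne_top.2 h
    · filter_upwards [ae_restrict_mem measurableSet_Ioc] with r hr
      obtain ⟨h1, h2⟩ := hr; positivity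
  have h2 : IntegrableOn (fun x : ℝ => x ^ (-1 : ℝ)) (Set.Ioo 0 1) := by
    refine (hint.mono_set Set.Ioo_subset_Ioc_self).congr_fun ?_ measurableSet_Ioo
    intro x hx
    simp [Real.rpow_neg_one, one_div]
  rw [intervalIntegral.integrableOn_Ioo_rpow_iff one_pos] at h2
  linarith

/-- For measures supported on closed sets, condition (1.2) implies Assumption 2: if
`∫₀¹ (1/r) ∫_ι L([∂(H i)]^r) dν(i) dr < ∞`, where `[∂H]^r = {x ∈ H | dist(x,∂H) < r}` is
the inner `r`-neighbourhood of the boundary, then `ν`-almost every `H i` has Lebesgue-null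
boundary. -/
theorem ae_frontier_null_of_inner_boundary_integrable {ι : Type*} [MeasurableSpace ι]
    (d : ℕ) (ν : Measure ι) (H : ι → Set (EuclideanSpace ℝ (Fin d)))
    (hcl : ∀ i, IsClosed (H i))
    (hmeas : ∀ r ∈ Set.Ioc (0:ℝ) 1, Measurable fun i =>
      volume {y | y ∈ H i ∧ Metric.infDist y (frontier (H i)) < r})
    (hmeas' : Measurable fun i => volume (frontier (H i)))
    (hfin : ∫⁻ r in Set.Ioc (0:ℝ) 1, ENNReal.ofReal (1/r) *
      ∫⁻ i, volume {y | y ∈ H i ∧ Metric.infDist y (frontier (H i)) < r} ∂ν < ⊤) :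
    ∀ᵐ i ∂ν, volume (frontier (H i)) = 0 := by
  set C := ∫⁻ i, volume (frontier (H i)) ∂ν with hC
  have hCzero : C = 0 := by
    by_contra hne
    -- for each r ∈ (0,1], the inner integral dominates C
    have key : ∀ r ∈ Set.Ioc (0:ℝ) 1,
        C ≤ ∫⁻ i, volume {y | y ∈ H i ∧ Metric.infDist y (frontier (H i)) < r} ∂ν := by
      intro r hr
      refine lintegral_mono fun i => measure_mono fun y hy => ?_
      refine ⟨(hcl i).frontier_subset hy, ?_⟩
      rw [Metric.infDist_zero_of_mem hy]
      exact hr.1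
    have hbound : ∫⁻ r in Set.Ioc (0:ℝ) 1, ENNReal.ofReal (1/r) * C ≤
        ∫⁻ r in Set.Ioc (0:ℝ) 1, ENNReal.ofReal (1/r) *
          ∫⁻ i, volume {y | y ∈ H i ∧ Metric.infDist y (frontier (H i)) < r} ∂ν := by
      refine setLIntegral_mono' measurableSet_Ioc fun r hr => ?_
      exact mul_le_mul_right (key r hr) _
    have heq : ∫⁻ r in Set.Ioc (0:ℝ) 1, ENNReal.ofReal (1/r) * C =
        (∫⁻ r in Set.Ioc (0:ℝ) 1, ENNReal.ofReal (1/r)) * C :=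
      lintegral_mul_const _ ((measurable_const.div measurable_id).ennreal_ofReal)
    rw [heq, lintegral_one_div_Ioc_eq_top, ENNReal.top_mul hne] at hbound
    exact absurd (lt_of_le_of_lt hbound hfin) (lt_irrefl ⊤)
  rw [hC, lintegral_eq_zero_iff hmeas'] at hCzero
  exact hCzero
end
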